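/- If an ideal X of 2-colorings of complete graphs contains, for every r ≥ 1, an r-wealthy coloring of type 3 (i.e., a coloring (2r,χ) whose bipartite matrix M_K between [r] and [r+1,2r] is similar to the identity matrix I_r), then |X_n| ≥ F_n for all n ≥ 1, where (F_n)_{n≥1} = (1,2,3,5,8,...). -/

import Mathlib

/-- A (directed representation of an) edge: a pair of vertices `p` with `p.1 < p.2`. -/
abbrev Edge (n : ℕ) := {p : Fin n × Fin n // p.1 < p.2}

/-- An edge-`C`-colored complete graph: a number of vertices together with a coloring
of all edges by elements of `C`. -/
abbrev Coloring (C : Type) := (n : ℕ) × (Edge n → C)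

/-- Build an edge from natural numbers `i < j < n`. -/
def mkE {n : ℕ} (i j : ℕ) (hij : i < j) (hj : j < n) : Edge n :=
  ⟨(⟨i, lt_trans hij hj⟩, ⟨j, hj⟩), Fin.mk_lt_mk.mpr hij⟩

/-- The image of an edge under a strictly increasing vertex map. -/
def edgeMap {a b : ℕ} (f : Fin a → Fin b) (hf : StrictMono f) (e : Edge a) : Edge b :=
  ⟨(f e.1.1, f e.1.2), hf e.2⟩

/-- Containment of colorings: `K ⪯ L` via a strictly increasing vertex map that sends
the color of each edge to a `le`-larger color. -/
def ColLe {C : Type} (le : C → C → Prop) (K L : Coloring C) : Prop :=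
  ∃ f : Fin K.1 → Fin L.1, ∃ hf : StrictMono f,
    ∀ e : Edge K.1, le (K.2 e) (L.2 (edgeMap f hf e))

/-- A lower ideal of colorings. -/
def IsIdeal {C : Type} (le : C → C → Prop) (X : Set (Coloring C)) : Prop :=
  ∀ K L : Coloring C, ColLe le K L → L ∈ X → K ∈ X

/-- The `r × r` 0-1 matrix `M_K` of a coloring `K=(2r,χ)`: `M_K(i,j) = χ({i, r+j})`
(with the convention that color `0` is white). -/
def matOf {r : ℕ} (χ : Edge (2 * r) → Fin 2) : Fin r → Fin r → Fin 2 :=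
  fun i j => χ (mkE i.val (r + j.val)
    (by have := i.isLt; omega) (by have := j.isLt; omega))

/-- Swapping the two values 0 and 1. -/
def swap2 : Fin 2 → Fin 2 := fun x => if x = 0 then 1 else 0

/-- The identity 0-1 matrix `I_r`. -/
def idMat (r : ℕ) : Fin r → Fin r → Fin 2 := fun i j => if i = j then 1 else 0

/-- `M` is similar to `I_r`: it equals `I_r` after optionally taking the vertical mirror
image (reversing the order of columns) and/or swapping 0 and 1. -/
def SimilarToId {r : ℕ} (M : Fin r → Fin r → Fin 2) : Prop :=
  ∃ sw mir : Bool, ∀ i j : Fin r,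
    M i j = (if sw then swap2 (idMat r i (if mir then j.rev else j))
             else idMat r i (if mir then j.rev else j))


/-!
Split the `n` vertices into `⌊n/2⌋` row vertices and `⌈n/2⌉` column vertices of `M_K`, where
`K = (6n, χ)`. A string `s` of length `n - 1` with no two adjacent `1`s is traced as a staircase
through the entries `(0,0), (0,1), (1,1), (1,2), …` of `I_r`: row vertex `a` goes to row `3a + 2`,
and column vertex `b` to a column that meets the identity in row `b - 1` or `b` exactly when bit
`2b - 1` or `2b` of `s` is set. The coloring induced on these `n` vertices lies in `X` and records
`s` along the staircase, so the `F_n` such strings give distinct members of `X_n`. Mirroring the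
columns or swapping the colors only permutes columns and colors.
-/

open Function

def NoAdjacentTrue {m : ℕ} (s : Fin m → Bool) : Prop :=
  ∀ k l : Fin m, (k : ℕ) + 1 = l → s k = true → s l = false

instance {m : ℕ} (s : Fin m → Bool) : Decidable (NoAdjacentTrue s) :=
  inferInstanceAs (Decidable (∀ _ _, _))

namespace NoAdjacentTrue

variable {m : ℕ}

lemma tail {s : Fin (m + 1) → Bool} (hs : NoAdjacentTrue s) : NoAdjacentTrue (Fin.tail s) :=
  fun k l hkl ↦ hs k.succ l.succ (by simp [hkl])

lemma cons_false {s : Fin m → Bool} (hs : NoAdjacentTrue s) :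
    NoAdjacentTrue (Fin.cons false s : Fin (m + 1) → Bool) := by
  intro k l hkl hk
  cases k using Fin.cases with
  | zero => simp at hk
  | succ k =>
    cases l using Fin.cases with
    | zero => simp at hkl
    | succ l => exact hs k l (by simpa using hkl) hk

lemma cons_true_cons_false {s : Fin m → Bool} (hs : NoAdjacentTrue s) :
    NoAdjacentTrue (Fin.cons true (Fin.cons false s) : Fin (m + 2) → Bool) := by
  intro k l hkl hk
  cases l using Fin.cases with
  | zero => simp at hkl
  | succ l =>
    cases k using Fin.cases with
    | zero =>
      obtain rfl : l = 0 := Fin.ext (by simpa using hkl.symm)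
      rfl
    | succ k => exact hs.cons_false k l (by simpa using hkl) hk

end NoAdjacentTrue

/-- Split according to the first letter: a string starting with `true` continues with `false`. -/
def noAdjacentTrueEquiv (m : ℕ) :
    {s : Fin (m + 2) → Bool // NoAdjacentTrue s} ≃
      {s : Fin (m + 1) → Bool // NoAdjacentTrue s} ⊕ {s : Fin m → Bool // NoAdjacentTrue s} where
  toFun s :=
    if s.1 0 then .inr ⟨Fin.tail (Fin.tail s.1), s.2.tail.tail⟩ else .inl ⟨Fin.tail s.1, s.2.tail⟩
  invFun
    | .inl s => ⟨Fin.cons false s.1, s.2.cons_false⟩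
    | .inr s => ⟨Fin.cons true (Fin.cons false s.1), s.2.cons_true_cons_false⟩
  left_inv := by
    rintro ⟨s, hs⟩
    apply Subtype.ext
    by_cases h0 : s 0 = true
    · have h1 : s 1 = false := hs 0 1 rfl h0
      ext i
      cases i using Fin.cases with
      | zero => simp [h0]
      | succ i => cases i using Fin.cases with
        | zero => simpa [h0] using h1.symm
        | succ i => simp [h0, Fin.tail]
    · simpa [h0] using Fin.cons_self_tail s
  right_inv := by
    rintro (s | s) <;> simp

lemma card_noAdjacentTrue (m : ℕ) :
    Nat.card {s : Fin m → Bool // NoAdjacentTrue s} = Nat.fib (m + 2) := by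
  induction m using Nat.twoStepInduction with
  | zero => rw [Nat.card_eq_fintype_card]; decide
  | one => rw [Nat.card_eq_fintype_card]; decide
  | more m ih₀ ih₁ =>
    rw [Nat.card_congr (noAdjacentTrueEquiv m), Nat.card_sum, ih₁, ih₀,
      Nat.fib_add_two (n := m + 2), add_comm]

def padFalse {m : ℕ} (s : Fin m → Bool) (k : ℕ) : Bool :=
  if h : k < m then s ⟨k, h⟩ else false

lemma padFalse_of_lt {m : ℕ} (s : Fin m → Bool) (k : Fin m) : padFalse s k = s k :=
  dif_pos k.isLt

lemma NoAdjacentTrue.padFalse_succ {m : ℕ} {s : Fin m → Bool} (hs : NoAdjacentTrue s) (k : ℕ)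
    (hk : padFalse s k = true) : padFalse s (k + 1) = false := by
  unfold padFalse at hk ⊢
  split_ifs at hk ⊢ with h h'
  · exact hs ⟨k, h'⟩ ⟨k + 1, h⟩ rfl hk
  · rfl

/-- Column `b` of the staircase: it meets row `3 (b - 1) + 2` if bit `2b - 1` is set, row
`3 b + 2` if bit `2b` is set, and no row of the form `3 a + 2` otherwise. -/
def staircaseCol (t : ℕ → Bool) (b : ℕ) : ℕ :=
  if 0 < b ∧ t (2 * b - 1) then 3 * b - 1 else if t (2 * b) then 3 * b + 2 else 3 * b

section Staircase

variable {t : ℕ → Bool}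

lemma staircaseCol_le (t : ℕ → Bool) (b : ℕ) : staircaseCol t b ≤ 3 * b + 2 := by
  unfold staircaseCol; split_ifs <;> omega

lemma staircaseCol_strictMono (ht : ∀ k, t k = true → t (k + 1) = false) :
    StrictMono (staircaseCol t) := by
  refine strictMono_nat_of_lt_succ fun b ↦ ?_
  have := ht (2 * b)
  unfold staircaseCol
  rw [show 2 * (b + 1) - 1 = 2 * b + 1 by omega]
  split_ifs <;> simp_all <;> omega

lemma row_eq_staircaseCol_iff (ht : ∀ k, t k = true → t (k + 1) = false) (k : ℕ) :
    3 * (k / 2) + 2 = staircaseCol t ((k + 1) / 2) ↔ t k = true := by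
  obtain ⟨a, rfl | rfl⟩ := Nat.even_or_odd' k
  · have : 0 < a → t (2 * a - 1) = true → t (2 * a) = false := fun ha ↦ by
      simpa [Nat.sub_add_cancel (show 1 ≤ 2 * a by omega)] using ht (2 * a - 1)
    rw [show (2 * a + 1) / 2 = a by omega, show 2 * a / 2 = a by omega]
    unfold staircaseCol
    split_ifs <;> simp_all; omega
  · have := ht (2 * a + 1)
    rw [show (2 * a + 1 + 1) / 2 = a + 1 by omega, show (2 * a + 1) / 2 = a by omega]
    unfold staircaseCol
    rw [show 2 * (a + 1) - 1 = 2 * a + 1 by omega, show 2 * (a + 1) = 2 * a + 1 + 1 by omega]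
    split_ifs <;> simp_all <;> omega

end Staircase

section BipartiteEmbedding

variable {p q r : ℕ} {ρ : Fin p → Fin r} {γ : Fin q → Fin r}

/-- The first `p` vertices go to the rows `ρ` and the last `q` to the columns `γ` of `M_K`. -/
def bipartiteEmbedding (ρ : Fin p → Fin r) (γ : Fin q → Fin r) : Fin (p + q) → Fin (2 * r) :=
  Fin.append (fun a ↦ ⟨ρ a, by omega⟩) (fun b ↦ ⟨r + γ b, by omega⟩)

lemma bipartiteEmbedding_strictMono (hρ : StrictMono ρ) (hγ : StrictMono γ) :
    StrictMono (bipartiteEmbedding ρ γ) := by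
  intro u v huv
  cases u using Fin.addCases with
  | left a =>
    cases v using Fin.addCases with
    | left a' => simpa [bipartiteEmbedding] using hρ huv
    | right b' => simp [bipartiteEmbedding, Fin.lt_def]; omega
  | right b =>
    cases v using Fin.addCases with
    | left a' => exact absurd huv (by simp [Fin.lt_def]; omega)
    | right b' =>
      simpa [bipartiteEmbedding] using hγ ((Fin.natAdd_lt_natAdd_iff p).1 huv)

lemma apply_edgeMap_bipartiteEmbedding (χ : Edge (2 * r) → Fin 2)
    (hf : StrictMono (bipartiteEmbedding ρ γ)) (a : Fin p) (b : Fin q) :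
    χ (edgeMap _ hf (mkE a (p + b) (by omega) (by omega))) = matOf χ (ρ a) (γ b) := by
  have : edgeMap _ hf (mkE a (p + b) (by omega) (by omega)) =
      ⟨(bipartiteEmbedding ρ γ (Fin.castAdd q a), bipartiteEmbedding ρ γ (Fin.natAdd p b)),
        hf (by simp [Fin.lt_def]; omega)⟩ := rfl
  rw [this]
  simp only [bipartiteEmbedding, Fin.append_left, Fin.append_right]
  rfl

end BipartiteEmbedding

def revIf (mir : Bool) {n : ℕ} (i : Fin n) : Fin n := if mir then i.rev else i

lemma revIf_revIf (mir : Bool) {n : ℕ} (i : Fin n) : revIf mir (revIf mir i) = i := by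
  cases mir <;> simp [revIf]

lemma StrictMono.revIf_comp_comp_revIf {m n : ℕ} {f : Fin m → Fin n} (hf : StrictMono f)
    (mir : Bool) : StrictMono (revIf mir ∘ f ∘ revIf mir) := by
  cases mir
  · exact hf
  · exact Fin.rev_strictAnti.comp (hf.comp_strictAnti Fin.rev_strictAnti)

lemma SimilarToId.exists_injective {r : ℕ} {M : Fin r → Fin r → Fin 2} (hM : SimilarToId M) :
    ∃ g : Fin 2 → Fin 2, Injective g ∧
      ∃ mir : Bool, ∀ i j, M i (revIf mir j) = g (idMat r i j) := by
  obtain ⟨sw, mir, hM⟩ := hM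
  refine ⟨if sw then swap2 else id, ?_, mir, fun i j ↦ ?_⟩
  · cases sw
    · exact injective_id
    · decide
  · rw [hM, ← revIf, revIf_revIf]
    cases sw <;> rfl

lemma IsIdeal.comap_mem {C : Type} {le : C → C → Prop} [Std.Refl le] {X : Set (Coloring C)}
    (hX : IsIdeal le X) {m n : ℕ} {χ : Edge m → C} (hχ : ⟨m, χ⟩ ∈ X) {f : Fin n → Fin m}
    (hf : StrictMono f) : ⟨n, χ ∘ edgeMap f hf⟩ ∈ X :=
  hX _ _ ⟨f, hf, fun _ ↦ refl _⟩ hχ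

lemma card_le_card_fiber {C ι : Type} [Finite C] {X : Set (Coloring C)} {n : ℕ}
    {F : ι → Edge n → C} (hF : Injective F) (hFX : ∀ i, ⟨n, F i⟩ ∈ X) :
    Nat.card ι ≤ Nat.card {K : Coloring C // K ∈ X ∧ K.1 = n} := by
  have : Finite {K : Coloring C // K ∈ X ∧ K.1 = n} := by
    refine Set.Finite.to_subtype ((Set.finite_range (Sigma.mk n)).subset ?_)
    rintro ⟨m, χ⟩ ⟨-, rfl : m = n⟩
    exact ⟨χ, rfl⟩
  exact Nat.card_le_card_of_injective (fun i ↦ ⟨⟨n, F i⟩, hFX i, rfl⟩)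
    fun i j hij ↦ hF (sigma_mk_injective (congrArg Subtype.val hij :))

section StaircaseEmbedding

variable {p q : ℕ} {t : ℕ → Bool} {mir : Bool}

def staircaseEmbedding (p q : ℕ) (t : ℕ → Bool) (mir : Bool) :
    Fin (p + q) → Fin (2 * (3 * (p + q))) :=
  bipartiteEmbedding (fun a : Fin p ↦ ⟨3 * a + 2, by omega⟩)
    (revIf mir ∘ (fun b : Fin q ↦ ⟨staircaseCol t b, by have := staircaseCol_le t b; omega⟩) ∘
      revIf mir)

lemma staircaseEmbedding_strictMono (ht : ∀ k, t k = true → t (k + 1) = false) (mir : Bool) :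
    StrictMono (staircaseEmbedding p q t mir) := by
  refine bipartiteEmbedding_strictMono (fun a a' h ↦ ?_) (.revIf_comp_comp_revIf ?_ mir)
  · exact Fin.mk_lt_mk.2 (by have : (a : ℕ) < a' := h; omega)
  · exact fun b b' h ↦ staircaseCol_strictMono ht h

lemma apply_edgeMap_staircaseEmbedding {χ : Edge (2 * (3 * (p + q))) → Fin 2}
    {g : Fin 2 → Fin 2} (hχ : ∀ i j, matOf χ i (revIf mir j) = g (idMat _ i j))
    (hf : StrictMono (staircaseEmbedding p q t mir)) (a : Fin p) (b : Fin q) :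
    χ (edgeMap _ hf (mkE a (p + revIf mir b) (by omega) (by omega))) =
      g (if 3 * a + 2 = staircaseCol t b then 1 else 0) := by
  refine (apply_edgeMap_bipartiteEmbedding χ hf a _).trans ?_
  rw [comp_apply, comp_apply, revIf_revIf, hχ]
  simp [idMat, Fin.ext_iff]

theorem staircaseEmbedding_injective (hpq : p ≤ q) (hqp : q ≤ p + 1)
    {χ : Edge (2 * (3 * (p + q))) → Fin 2} {g : Fin 2 → Fin 2} (hg : Injective g)
    (hχ : ∀ i j, matOf χ i (revIf mir j) = g (idMat _ i j)) :
    Injective fun s : {s : Fin (p + q - 1) → Bool // NoAdjacentTrue s} ↦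
      χ ∘ edgeMap _ (staircaseEmbedding_strictMono (p := p) (q := q) s.2.padFalse_succ mir) := by
  intro s s' hss'
  ext k
  have hk := k.isLt
  have hcolor :=
    (apply_edgeMap_staircaseEmbedding hχ _ ⟨k / 2, by omega⟩ ⟨(k + 1) / 2, by omega⟩).symm.trans
      ((congrFun hss' _).trans (apply_edgeMap_staircaseEmbedding hχ _ _ _))
  rw [← padFalse_of_lt s.1, ← padFalse_of_lt s'.1, Bool.eq_iff_iff,
    ← row_eq_staircaseCol_iff s.2.padFalse_succ, ← row_eq_staircaseCol_iff s'.2.padFalse_succ]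
  have := hg hcolor
  split_ifs at this <;> simp_all

end StaircaseEmbedding

theorem card_noAdjacentTrue_le_card_fiber {le : Fin 2 → Fin 2 → Prop} [Std.Refl le]
    {X : Set (Coloring (Fin 2))} (hX : IsIdeal le X) {p q : ℕ} (hpq : p ≤ q) (hqp : q ≤ p + 1)
    {χ : Edge (2 * (3 * (p + q))) → Fin 2} (hχ : SimilarToId (matOf χ)) (hχX : ⟨_, χ⟩ ∈ X) :
    Nat.card {s : Fin (p + q - 1) → Bool // NoAdjacentTrue s} ≤
      Nat.card {K : Coloring (Fin 2) // K ∈ X ∧ K.1 = p + q} := by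
  obtain ⟨g, hg, mir, hχg⟩ := hχ.exists_injective
  exact card_le_card_fiber (staircaseEmbedding_injective hpq hqp hg hχg)
    fun _ ↦ hX.comap_mem hχX _

/-- If an ideal `X` of 2-colorings contains, for every `r ≥ 1`, an
`r`-wealthy coloring of type 3 (a coloring `(2r,χ)` with `M_K` similar to `I_r`), then
`|X_n| ≥ F_n` for all `n ≥ 1`, where `F_1 = 1, F_2 = 2, ...`, i.e. `F_n = Nat.fib (n+1)`. -/
theorem stmt_17 (X : Set (Coloring (Fin 2))) (hX : IsIdeal (· = ·) X)
    (h : ∀ r : ℕ, 1 ≤ r → ∃ χ : Edge (2 * r) → Fin 2,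
        SimilarToId (matOf χ) ∧ (⟨2 * r, χ⟩ : Coloring (Fin 2)) ∈ X) :
    ∀ n : ℕ, 1 ≤ n →
      Nat.fib (n + 1) ≤ Nat.card {K : Coloring (Fin 2) // K ∈ X ∧ K.1 = n} := by
  intro n hn
  obtain ⟨χ, hχ, hχX⟩ := h (3 * (n / 2 + (n - n / 2))) (by omega)
  have key := card_noAdjacentTrue_le_card_fiber hX (by omega) (by omega) hχ hχX
  rwa [card_noAdjacentTrue, show n / 2 + (n - n / 2) - 1 + 2 = n + 1 by omega,
    show n / 2 + (n - n / 2) = n by omega] at key
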